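/- arXiv:0910.3301 — 4 statements merged into one kernel-verified Lean document; each statement's English description precedes it below -/
import Mathlib

section
/- Let v_a, v_b : Fin N → ℝ be two vectors with nonnegative entries, and let p_a, p_b : Fin N → Fin N be permutations sorting them in decreasing order (i.e., v_a ∘ p_a and v_b ∘ p_b are antitone). If the p-th largest element of v_a and the q-th largest element of v_b share the same index (i.e., p_a p = p_b q), then the maximum of i ↦ v_a i * v_b i over all indices is attained at some index of the form p_a j with j ≤ p or of the form p_b k with k ≤ q. -/
theorem stmt_0 (N : ℕ) (hN : 0 < N) (va vb : Fin N → ℝ)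
    (hva : ∀ i, 0 ≤ va i) (hvb : ∀ i, 0 ≤ vb i)
    (pa pb : Equiv.Perm (Fin N))
    (hpa : ∀ j j' : Fin N, j ≤ j' → va (pa j') ≤ va (pa j))
    (hpb : ∀ j j' : Fin N, j ≤ j' → vb (pb j') ≤ vb (pb j))
    (p q : Fin N) (hpq : pa p = pb q) :
    ∃ i : Fin N, ((∃ j ≤ p, i = pa j) ∨ (∃ k ≤ q, i = pb k)) ∧
      ∀ i' : Fin N, va i' * vb i' ≤ va i * vb i := by
  have : Nonempty (Fin N) := ⟨⟨0, hN⟩⟩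
  obtain ⟨m, -, hm⟩ := Finset.exists_max_image Finset.univ
    (fun i => va i * vb i) ⟨⟨0, hN⟩, Finset.mem_univ _⟩
  have hm' : ∀ i', va i' * vb i' ≤ va m * vb m := fun i' => hm i' (Finset.mem_univ _)
  set j := pa.symm m with hj
  set k := pb.symm m with hk
  have hmj : m = pa j := (pa.apply_symm_apply m).symm
  have hmk : m = pb k := (pb.apply_symm_apply m).symm
  by_cases hjp : j ≤ p
  · exact ⟨m, Or.inl ⟨j, hjp, hmj⟩, hm'⟩
  by_cases hkq : k ≤ q
  · exact ⟨m, Or.inr ⟨k, hkq, hmk⟩, hm'⟩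
  · refine ⟨pb q, Or.inr ⟨q, le_refl q, rfl⟩, fun i' => (hm' i').trans ?_⟩
    have h1 : va m ≤ va (pb q) := by
      rw [hmj, ← hpq]; exact hpa p j (le_of_not_ge hjp)
    have h2 : vb m ≤ vb (pb q) := by
      rw [hmk]; exact hpb q k (le_of_not_ge hkq)
    exact mul_le_mul h1 h2 (hvb m) (hva _)
end

section
/- Correctness of the sorted two-list search: let v_a, v_b be nonnegative vectors with sorting permutations p_a, p_b (antitone compositions), and suppose s : ℕ is such that the candidate set {p_a t, p_b t : t ≤ s} has been examined and s ≥ end_a' where end_a' = min over examined t ≤ s of p_a⁻¹(p_b t). Then max over all i of v_a i * v_b i equals max over the examined candidates {p_a t | t ≤ s} ∪ {p_b t | t ≤ s} of v_a i * v_b i. -/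
theorem stmt_15 (N : ℕ) (hN : 0 < N) (va vb : Fin N → NNReal)
    (pa pb : Equiv.Perm (Fin N))
    (hpa : ∀ j j' : Fin N, j ≤ j' → va (pa j') ≤ va (pa j))
    (hpb : ∀ j j' : Fin N, j ≤ j' → vb (pb j') ≤ vb (pb j))
    (s : Fin N) (hcross : ∃ t ≤ s, pa⁻¹ (pb t) ≤ s) :
    ∃ i : Fin N, ((∃ t ≤ s, i = pa t) ∨ (∃ t ≤ s, i = pb t)) ∧
      ∀ i' : Fin N, va i' * vb i' ≤ va i * vb i := by
  obtain ⟨t, hts, hcross⟩ := hcross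
  set S : Finset (Fin N) :=
    (Finset.Iic s).image pa ∪ (Finset.Iic s).image pb with hS
  have hSne : S.Nonempty := by
    exact ⟨pa t, Finset.mem_union_left _ (Finset.mem_image.2 ⟨t, Finset.mem_Iic.2 hts, rfl⟩)⟩
  obtain ⟨i, hiS, hmax⟩ := S.exists_max_image (fun i => va i * vb i) hSne
  have hbtS : pb t ∈ S := by
    exact Finset.mem_union_right _ (Finset.mem_image.2 ⟨t, Finset.mem_Iic.2 hts, rfl⟩)
  refine ⟨i, ?_, ?_⟩
  · simp only [hS, Finset.mem_union, Finset.mem_image, Finset.mem_Iic] at hiS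
    rcases hiS with ⟨u, hu, h⟩ | ⟨u, hu, h⟩
    · exact Or.inl ⟨u, hu, h.symm⟩
    · exact Or.inr ⟨u, hu, h.symm⟩
  · intro i'
    by_cases h : i' ∈ S
    · exact hmax i' h
    · -- i' not a candidate: pa⁻¹ i' > s and pb⁻¹ i' > s
      simp only [hS, Finset.mem_union, Finset.mem_image, Finset.mem_Iic, not_or,
        not_exists, not_and] at h
      obtain ⟨ha, hb⟩ := h
      have hja : s < pa⁻¹ i' := by
        by_contra hle
        exact ha (pa⁻¹ i') (le_of_not_gt hle) (by simp)
      have hjb : s < pb⁻¹ i' := by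
        by_contra hle
        exact hb (pb⁻¹ i') (le_of_not_gt hle) (by simp)
      have h1 : va i' ≤ va (pb t) := by
        have := hpa (pa⁻¹ (pb t)) (pa⁻¹ i') (le_of_lt (lt_of_le_of_lt hcross hja))
        simpa using this
      have h2 : vb i' ≤ vb (pb t) := by
        have := hpb t (pb⁻¹ i') (le_of_lt (lt_of_le_of_lt hts hjb))
        simpa using this
      calc va i' * vb i' ≤ va (pb t) * vb (pb t) := mul_le_mul' h1 h2
        _ ≤ va i * vb i := hmax _ hbtS
end

section
/- For a uniformly random permutation σ of {0,…,N−1}, with M(σ) the least m ≥ 1 such that ∃ j < m with σ(j) < m, the expected value satisfies E[M] = Σ_{m=0}^{⌊N/2⌋} ((N−m)!)² / ((N−2m)! · N!). -/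
/-!
`m < M σ` exactly when `σ` maps `{0, …, m - 1}` into `{m, …, N - 1}`, so `E[M] = ∑ₘ P(M > m)`.
A permutation mapping an `m`-set into a given `(N - m)`-set is an injection of the former into
the latter, `(N - m)⋯(N - 2m + 1)` choices, together with a bijection of the complements,
`(N - m)!` choices. The product is `(N - m)!² / (N - 2m)!`, and it vanishes once `2m > N`.
-/

open Finset Nat

namespace Equiv.Perm

theorem map_toEmbedding_eq_iff {α : Type*} (σ : Perm α) (s u : Finset α) :
    s.map σ.toEmbedding = u ↔ ∀ a, σ a ∈ u ↔ a ∈ s := by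
  rw [Finset.ext_iff, ← σ.forall_congr_right]
  simp [iff_comm]

section Counting

variable {α : Type*} [Fintype α] [DecidableEq α]

def mapsOntoEquivProd (s u : Finset α) :
    {σ : Perm α // ∀ a, σ a ∈ u ↔ a ∈ s} ≃
      ({a // a ∈ s} ≃ {a // a ∈ u}) × ({a // a ∉ s} ≃ {a // a ∉ u}) where
  toFun σ :=
    (σ.1.subtypeEquiv fun a => (σ.2 a).symm, σ.1.subtypeEquiv fun a => not_congr (σ.2 a).symm)
  invFun e := ⟨Equiv.subtypeCongr e.1 e.2, fun a => by
    by_cases ha : a ∈ s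
    · simp [Equiv.subtypeCongr, Equiv.sumCompl_symm_apply_of_pos ha, ha]
    · simpa [Equiv.subtypeCongr, Equiv.sumCompl_symm_apply_of_neg ha, ha] using (e.2 ⟨a, ha⟩).2⟩
  left_inv σ := by
    ext a
    by_cases ha : a ∈ s <;> simp [Equiv.subtypeCongr, ha]
  right_inv e := by
    ext x <;> simp [Equiv.subtypeCongr, x.2]

theorem card_mapsOnto (s u : Finset α) (h : #s = #u) :
    #{σ : Perm α | ∀ a, σ a ∈ u ↔ a ∈ s} = (#s)! * (Fintype.card α - #s)! := by
  rw [← Fintype.card_subtype, Fintype.card_congr (mapsOntoEquivProd s u), Fintype.card_prod,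
    Fintype.card_equiv (Fintype.equivOfCardEq (by simpa using h)),
    Fintype.card_equiv (Fintype.equivOfCardEq (by simp [Fintype.card_subtype_compl, h]))]
  simp [Fintype.card_subtype_compl]

theorem card_mapsTo (s t : Finset α) :
    #{σ : Perm α | ∀ a ∈ s, σ a ∈ t} = (#t).descFactorial #s * (Fintype.card α - #s)! := by
  have himage : Set.MapsTo (fun σ : Perm α => s.map σ.toEmbedding)
      ({σ : Perm α | ∀ a ∈ s, σ a ∈ t} : Finset _) (t.powersetCard #s) := fun σ hσ => by
    refine mem_powersetCard.mpr ⟨fun x hx => ?_, card_map _⟩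
    obtain ⟨a, ha, rfl⟩ := mem_map.mp hx
    exact (mem_filter.mp hσ).2 a ha
  rw [card_eq_sum_card_fiberwise himage, descFactorial_eq_factorial_mul_choose,
    mul_comm _ (choose _ _), mul_assoc, ← card_powersetCard, ← smul_eq_mul, ← sum_const]
  refine sum_congr rfl fun u hu => ?_
  obtain ⟨hut, hsu⟩ := mem_powersetCard.mp hu
  rw [← card_mapsOnto s u hsu.symm, filter_filter]
  congr 1
  ext σ
  simp only [mem_filter, mem_univ, true_and, map_toEmbedding_eq_iff, and_iff_right_iff_imp]
  exact fun hσ a ha => hut ((hσ a).2 ha)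

end Counting

end Equiv.Perm

noncomputable def prefixMeet {N : ℕ} (σ : Equiv.Perm (Fin N)) : ℕ :=
  sInf {m : ℕ | 1 ≤ m ∧ ∃ j : Fin N, (j : ℕ) < m ∧ (σ j : ℕ) < m}

section PrefixMeet

variable {N : ℕ}

theorem lt_prefixMeet_iff (hN : 0 < N) (σ : Equiv.Perm (Fin N)) (m : ℕ) :
    m < prefixMeet σ ↔ ∀ j : Fin N, (j : ℕ) < m → m ≤ σ j := by
  have hNmem : N ∈ {m : ℕ | 1 ≤ m ∧ ∃ j : Fin N, (j : ℕ) < m ∧ (σ j : ℕ) < m} :=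
    ⟨hN, ⟨0, hN⟩, hN, (σ _).isLt⟩
  rw [prefixMeet, Nat.lt_iff_add_one_le, le_csInf_iff' ⟨N, hNmem⟩, mem_lowerBounds]
  constructor
  · intro h j hj
    by_contra! hσj
    have := h m ⟨by omega, j, hj, hσj⟩
    omega
  · rintro h k ⟨-, j, hjk, hσjk⟩
    by_contra! hkm
    have := h j (by omega)
    omega

theorem prefixMeet_le (hN : 0 < N) (σ : Equiv.Perm (Fin N)) : prefixMeet σ ≤ N :=
  Nat.sInf_le ⟨hN, ⟨0, hN⟩, hN, (σ _).isLt⟩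

theorem prefixMeet_eq_card (hN : 0 < N) (σ : Equiv.Perm (Fin N)) :
    prefixMeet σ = #{m ∈ range N | ∀ j : Fin N, (j : ℕ) < m → m ≤ σ j} := by
  rw [filter_congr fun m _ => (lt_prefixMeet_iff hN σ m).symm, range_eq_Ico, Ico_filter_lt,
    min_eq_right (prefixMeet_le hN σ), card_Ico, Nat.sub_zero]

theorem sum_prefixMeet (hN : 0 < N) :
    ∑ σ : Equiv.Perm (Fin N), prefixMeet σ
      = ∑ m ∈ range N, (N - m).descFactorial m * (N - m)! := by
  simp_rw [prefixMeet_eq_card hN]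
  refine (sum_card_bipartiteAbove_eq_sum_card_bipartiteBelow
    (fun (σ : Equiv.Perm (Fin N)) m => ∀ j : Fin N, (j : ℕ) < m → m ≤ σ j)).trans
    (sum_congr rfl fun m hm => ?_)
  set s : Finset (Fin N) := {j | (j : ℕ) < m}
  have hs : #s = m := by rw [Fin.card_filter_val_lt, min_eq_right (mem_range.mp hm).le]
  have hcount := Equiv.Perm.card_mapsTo s sᶜ
  rw [card_compl, hs, Fintype.card_fin] at hcount
  rw [← hcount, bipartiteBelow]
  congr 1
  ext σ
  simp [s]

end PrefixMeet

theorem cast_descFactorial_mul_factorial {n m : ℕ} (h : 2 * m ≤ n) :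
    (((n - m).descFactorial m * (n - m)! : ℕ) : ℚ) = (n - m)! * (n - m)! / (n - 2 * m)! := by
  have hfac := factorial_mul_descFactorial (show m ≤ n - m by omega)
  rw [show n - m - m = n - 2 * m by omega] at hfac
  rw [eq_div_iff (by positivity), ← hfac]
  push_cast
  ring

theorem stmt_17 (N : ℕ) (hN : 2 ≤ N) :
    (∑ σ : Equiv.Perm (Fin N),
        ((sInf {m : ℕ | 1 ≤ m ∧ ∃ j : Fin N, (j : ℕ) < m ∧ (σ j : ℕ) < m} : ℕ) : ℚ))
        / (Nat.factorial N : ℚ)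
      = ∑ m ∈ Finset.range (N / 2 + 1),
          ((Nat.factorial (N - m) : ℚ) * (Nat.factorial (N - m) : ℚ))
            / ((Nat.factorial (N - 2 * m) : ℚ) * (Nat.factorial N : ℚ)) := by
  have hN0 : 0 < N := by omega
  change (∑ σ : Equiv.Perm (Fin N), (prefixMeet σ : ℚ)) / N ! = _
  rw [← Nat.cast_sum, sum_prefixMeet hN0, Nat.cast_sum, sum_div,
    ← sum_subset (range_subset_range.mpr (by omega : N / 2 + 1 ≤ N)) fun m _ hm => ?_]
  · refine sum_congr rfl fun m hm => ?_
    rw [cast_descFactorial_mul_factorial (by grind), div_div]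
  · rw [mem_range] at hm
    simp [descFactorial_eq_zero_iff_lt.mpr (by omega : N - m < m)]
end

section
/- E[M] ∈ O(√N): for the stopping variable M of the sorted two-list search under uniformly random independent order statistics, there is a constant C such that for all N ≥ 1, Σ_{m=0}^{⌊N/2⌋} ((N−m)!)²/((N−2m)!·N!) ≤ C·√N. -/
open Finset Nat

lemma descFact_pos {n k : ℕ} (h : k ≤ n) : 0 < n.descFactorial k := by
  have h1 := Nat.factorial_mul_descFactorial h
  rcases Nat.eq_zero_or_pos (n.descFactorial k) with h0 | h0
  · rw [h0, Nat.mul_zero] at h1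
    exact absurd h1.symm (Nat.factorial_pos n).ne'
  · exact h0

/-- descFactorial bound: (a.descFactorial k) ≤ (a/b)^k * b.descFactorial k -/
lemma descFact_bound (b : ℕ) (hb : 0 < b) :
    ∀ (k a : ℕ), a ≤ b →
      (a.descFactorial k : ℝ) ≤ ((a : ℝ) / b) ^ k * (b.descFactorial k : ℝ) := by
  intro k
  induction k with
  | zero => intro a hab; simp
  | succ k ih =>
    intro a hab
    rw [Nat.descFactorial_succ, Nat.descFactorial_succ]
    push_cast
    have hbpos : (0 : ℝ) < b := by exact_mod_cast hb
    have hratio : ((a : ℝ) / b) ^ (k + 1) * ((((b : ℕ) - k : ℕ) : ℝ)) * (b.descFactorial k : ℝ)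
        = ((a:ℝ)/b * (((b : ℕ) - k : ℕ) : ℝ)) * (((a : ℝ) / b) ^ k * (b.descFactorial k : ℝ)) := by
      ring
    have h1 : (((a : ℕ) - k : ℕ) : ℝ) ≤ (a:ℝ)/b * (((b : ℕ) - k : ℕ) : ℝ) := by
      rcases le_or_gt k a with hk | hk
      · rw [Nat.cast_sub hk, Nat.cast_sub (hk.trans hab)]
        rw [div_mul_eq_mul_div, le_div_iff₀ hbpos]
        have : (a:ℝ) * k ≤ b * k := by
          have : (a:ℝ) ≤ b := by exact_mod_cast hab
          nlinarith [Nat.cast_nonneg (α := ℝ) k]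
        nlinarith
      · have : (a : ℕ) - k = 0 := by omega
        rw [this]
        simp only [Nat.cast_zero]
        have h2 : (0:ℝ) ≤ (a:ℝ)/b := by positivity
        have h3 : (0:ℝ) ≤ (((b : ℕ) - k : ℕ) : ℝ) := Nat.cast_nonneg _
        positivity
    have h4 : (0:ℝ) ≤ ((a : ℝ) / b) ^ k * (b.descFactorial k : ℝ) := by positivity
    have h5 : (0:ℝ) ≤ (((a : ℕ) - k : ℕ) : ℝ) := Nat.cast_nonneg _
    calc (((a : ℕ) - k : ℕ) : ℝ) * (a.descFactorial k : ℝ)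
        ≤ (((a : ℕ) - k : ℕ) : ℝ) * (((a : ℝ) / b) ^ k * (b.descFactorial k : ℝ)) := by
          exact mul_le_mul_of_nonneg_left (ih a hab) h5
      _ ≤ ((a:ℝ)/b * (((b : ℕ) - k : ℕ) : ℝ)) * (((a : ℝ) / b) ^ k * (b.descFactorial k : ℝ)) := by
          exact mul_le_mul_of_nonneg_right h1 h4
      _ = ((a : ℝ) / b) ^ (k + 1) * ((((b : ℕ) - k : ℕ) : ℝ)) * (b.descFactorial k : ℝ) := by
          rw [hratio]
      _ = ((a : ℝ) / b) ^ (k + 1) * ((((b : ℕ) - k : ℕ) : ℝ) * (b.descFactorial k : ℝ)) := by ring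

/-- (1-x)^m ≤ 1/(1+m*x) for 0 ≤ x ≤ 1 -/
lemma pow_one_sub_le (x : ℝ) (hx0 : 0 ≤ x) (hx1 : x ≤ 1) (m : ℕ) :
    (1 - x) ^ m * (1 + m * x) ≤ 1 := by
  have h1 : 1 + (m:ℝ) * x ≤ (1 + x) ^ m := by
    have := one_add_mul_le_pow (a := x) (by linarith) m
    linarith
  have h2 : (0:ℝ) ≤ 1 - x := by linarith
  have h3 : (1 - x) ^ m * (1 + x) ^ m = (1 - x ^ 2) ^ m := by
    rw [← mul_pow]; ring_nf
  calc (1 - x) ^ m * (1 + (m:ℝ) * x) ≤ (1 - x) ^ m * (1 + x) ^ m := by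
        apply mul_le_mul_of_nonneg_left h1 (pow_nonneg h2 m)
    _ = (1 - x ^ 2) ^ m := h3
    _ ≤ 1 ^ m := by
        apply pow_le_pow_left₀ (by nlinarith) (by nlinarith)
    _ = 1 := one_pow m

/-- telescoping: sum of 1/m^2 over Ico (s+1) K ≤ 1/s -/
lemma sum_inv_sq_le (s : ℕ) (hs : 0 < s) (K : ℕ) :
    ∑ m ∈ Finset.Ico (s + 1) K, (1 : ℝ) / (m : ℝ) ^ 2 ≤ 1 / s := by
  have key : ∀ K : ℕ, s ≤ K →
      ∑ m ∈ Finset.Ico (s + 1) (K + 1), (1 : ℝ) / (m : ℝ) ^ 2 ≤ 1 / s - 1 / K := by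
    intro K
    induction K with
    | zero => intro h; omega
    | succ K ih =>
      intro h
      rcases Nat.lt_or_ge s (K + 1) with h' | h'
      · have hsK : s ≤ K := by omega
        rw [Finset.sum_Ico_succ_top (by omega)]
        have hK : (0:ℝ) < (K:ℝ) + 1 := by positivity
        have hKp : 0 < K := by
          rcases Nat.eq_zero_or_pos K with h0 | h0
          · omega
          · exact h0
        have hKr : (0:ℝ) < (K:ℝ) := by exact_mod_cast hKp
        have step : (1:ℝ) / ((K+1 : ℕ) : ℝ) ^ 2 ≤ 1 / K - 1 / ((K:ℝ)+1) := by
          push_cast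
          rw [div_sub_div _ _ (ne_of_gt hKr) (ne_of_gt hK)]
          rw [div_le_div_iff₀ (by positivity) (by positivity)]
          ring_nf
          nlinarith
        have := ih hsK
        push_cast at this step ⊢
        linarith
      · have : s = K + 1 := by omega
        subst this
        simp
  rcases Nat.lt_or_ge K (s + 1) with h | h
  · rw [Finset.Ico_eq_empty (by omega)]
    rw [Finset.sum_empty]
    positivity
  · have hK1 : 1 ≤ K := by omega
    obtain ⟨K', rfl⟩ : ∃ K', K = K' + 1 := ⟨K - 1, by omega⟩
    have hsK' : s ≤ K' := by omega
    have := key K' hsK'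
    have hK'r : (0:ℝ) ≤ 1 / (K' : ℝ) := by positivity
    linarith

theorem stmt_18 :
    ∃ C : ℝ, 0 < C ∧ ∀ N : ℕ, 1 ≤ N →
      (∑ m ∈ Finset.range (N / 2 + 1),
          ((Nat.factorial (N - m) : ℝ) * (Nat.factorial (N - m) : ℝ))
            / ((Nat.factorial (N - 2 * m) : ℝ) * (Nat.factorial N : ℝ)))
        ≤ C * Real.sqrt N := by
  refine ⟨5, by norm_num, ?_⟩
  intro N hN
  have hNpos : 0 < N := hN
  have hNr : (0:ℝ) < N := by exact_mod_cast hNpos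
  set s := Nat.sqrt N with hs
  have hspos : 0 < s := Nat.sqrt_pos.mpr hNpos
  have hsr : (0:ℝ) < s := by exact_mod_cast hspos
  -- term rewriting: a_m = descFactorial (N-m) m / descFactorial N m
  have hterm : ∀ m ∈ Finset.range (N / 2 + 1),
      ((Nat.factorial (N - m) : ℝ) * (Nat.factorial (N - m) : ℝ))
        / ((Nat.factorial (N - 2 * m) : ℝ) * (Nat.factorial N : ℝ))
      = ((N - m).descFactorial m : ℝ) / (N.descFactorial m : ℝ) := by
    intro m hm
    rw [Finset.mem_range] at hm
    have h2m : 2 * m ≤ N := by omega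
    have hmN : m ≤ N := by omega
    have hmNm : m ≤ N - m := by omega
    have e1 : ((N - m) - m)! * (N - m).descFactorial m = (N - m)! :=
      Nat.factorial_mul_descFactorial hmNm
    have e2 : (N - m)! * N.descFactorial m = N ! :=
      Nat.factorial_mul_descFactorial hmN
    have hNm2 : N - m - m = N - 2 * m := by omega
    rw [hNm2] at e1
    have f1 : ((N - 2 * m)! : ℝ) * ((N - m).descFactorial m : ℝ) = ((N - m)! : ℝ) := by
      exact_mod_cast congrArg (Nat.cast (R := ℝ)) e1
    have f2 : ((N - m)! : ℝ) * (N.descFactorial m : ℝ) = (N ! : ℝ) := by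
      exact_mod_cast congrArg (Nat.cast (R := ℝ)) e2
    have p1 : (0:ℝ) < (N - 2*m)! := by exact_mod_cast Nat.factorial_pos _
    have p2 : (0:ℝ) < (N - m)! := by exact_mod_cast Nat.factorial_pos _
    have p3 : (0:ℝ) < N ! := by exact_mod_cast Nat.factorial_pos _
    have p4 : (0:ℝ) < (N.descFactorial m : ℝ) := by
      exact_mod_cast descFact_pos hmN
    field_simp
    nlinarith [f1, f2]
  rw [Finset.sum_congr rfl hterm]
  -- bounds on a_m
  have habound : ∀ m, m ≤ N →
      ((N - m).descFactorial m : ℝ) / (N.descFactorial m : ℝ)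
        ≤ (((N:ℝ) - m) / N) ^ m := by
    intro m hm
    have p4 : (0:ℝ) < (N.descFactorial m : ℝ) := by
      exact_mod_cast descFact_pos hm
    rw [div_le_iff₀ p4]
    have := descFact_bound N hNpos m (N - m) (Nat.sub_le N m)
    rw [Nat.cast_sub hm] at this
    exact this
  have hb1 : ∀ m, m ≤ N →
      ((N - m).descFactorial m : ℝ) / (N.descFactorial m : ℝ) ≤ 1 := by
    intro m hm
    refine (habound m hm).trans ?_
    have h1 : ((N:ℝ) - m) / N ≤ 1 := by
      rw [div_le_one hNr]
      have : (0:ℝ) ≤ m := Nat.cast_nonneg m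
      linarith
    have h0 : (0:ℝ) ≤ ((N:ℝ) - m) / N := by
      apply div_nonneg _ (le_of_lt hNr)
      have : (m:ℝ) ≤ N := by exact_mod_cast hm
      linarith
    calc (((N:ℝ) - m) / N) ^ m ≤ 1 ^ m := pow_le_pow_left₀ h0 h1 m
      _ = 1 := one_pow m
  have hb2 : ∀ m, 1 ≤ m → m ≤ N →
      ((N - m).descFactorial m : ℝ) / (N.descFactorial m : ℝ) ≤ (N:ℝ) / (m:ℝ)^2 := by
    intro m hm1 hm
    refine (habound m hm).trans ?_
    have hmr : (0:ℝ) < m := by exact_mod_cast hm1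
    have hmrN : (m:ℝ) ≤ N := by exact_mod_cast hm
    set x : ℝ := (m:ℝ) / N with hx
    have hx0 : 0 ≤ x := by positivity
    have hx1 : x ≤ 1 := by rw [hx, div_le_one hNr]; exact hmrN
    have key := pow_one_sub_le x hx0 hx1 m
    have heq : ((N:ℝ) - m) / N = 1 - x := by
      rw [hx]; field_simp
    rw [heq]
    have hpos : (0:ℝ) < 1 + m * x := by positivity
    rw [← le_div_iff₀ hpos] at key
    refine key.trans ?_
    have hmx : (m:ℝ)^2 / N ≤ 1 + m * x := by
      rw [hx]
      have : (m:ℝ) * ((m:ℝ)/N) = (m:ℝ)^2 / N := by ring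
      rw [this]
      have : (0:ℝ) ≤ (m:ℝ)^2/N := by positivity
      linarith
    rw [div_le_div_iff₀ hpos (by positivity)]
    have h1 : (0:ℝ) < (m:ℝ)^2 / N := by positivity
    calc (1:ℝ) * (m:ℝ)^2 = ((m:ℝ)^2/N) * N := by field_simp
      _ ≤ (1 + m*x) * N := by nlinarith
      _ = (N:ℝ) * (1 + m*x) := by ring
  -- split the sum
  set K := N / 2 + 1 with hK
  have hsplit : ∑ m ∈ Finset.range K, ((N - m).descFactorial m : ℝ) / (N.descFactorial m : ℝ)
      = ∑ m ∈ (Finset.range K).filter (fun m => m ≤ s),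
          ((N - m).descFactorial m : ℝ) / (N.descFactorial m : ℝ)
        + ∑ m ∈ (Finset.range K).filter (fun m => ¬ m ≤ s),
          ((N - m).descFactorial m : ℝ) / (N.descFactorial m : ℝ) :=
    (Finset.sum_filter_add_sum_filter_not _ _ _).symm
  rw [hsplit]
  have hmle : ∀ m ∈ Finset.range K, m ≤ N := by
    intro m hm; rw [Finset.mem_range] at hm; omega
  have part1 : ∑ m ∈ (Finset.range K).filter (fun m => m ≤ s),
      ((N - m).descFactorial m : ℝ) / (N.descFactorial m : ℝ) ≤ (s:ℝ) + 1 := by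
    calc ∑ m ∈ (Finset.range K).filter (fun m => m ≤ s),
          ((N - m).descFactorial m : ℝ) / (N.descFactorial m : ℝ)
        ≤ ∑ _m ∈ (Finset.range K).filter (fun m => m ≤ s), (1:ℝ) := by
          apply Finset.sum_le_sum
          intro m hm
          exact hb1 m (hmle m (Finset.mem_filter.mp hm).1)
      _ = ((Finset.range K).filter (fun m => m ≤ s)).card := by
          rw [Finset.sum_const, nsmul_eq_mul, mul_one]
      _ ≤ ((s:ℝ) + 1) := by
          have hsub : (Finset.range K).filter (fun m => m ≤ s) ⊆ Finset.range (s + 1) := by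
            intro m hm
            rw [Finset.mem_filter] at hm
            rw [Finset.mem_range]
            omega
          have := Finset.card_le_card hsub
          rw [Finset.card_range] at this
          exact_mod_cast this
  have hfilter : (Finset.range K).filter (fun m => ¬ m ≤ s) = Finset.Ico (s + 1) K := by
    ext m
    simp [Finset.mem_filter, Finset.mem_Ico, Finset.mem_range]
    omega
  have part2 : ∑ m ∈ (Finset.range K).filter (fun m => ¬ m ≤ s),
      ((N - m).descFactorial m : ℝ) / (N.descFactorial m : ℝ) ≤ (N:ℝ) / s := by
    rw [hfilter]
    calc ∑ m ∈ Finset.Ico (s + 1) K,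
          ((N - m).descFactorial m : ℝ) / (N.descFactorial m : ℝ)
        ≤ ∑ m ∈ Finset.Ico (s + 1) K, (N:ℝ) * ((1:ℝ) / (m:ℝ)^2) := by
          apply Finset.sum_le_sum
          intro m hm
          rw [Finset.mem_Ico] at hm
          have hm1 : 1 ≤ m := by omega
          have hmN : m ≤ N := by omega
          have := hb2 m hm1 hmN
          rw [mul_one_div]
          exact this
      _ = (N:ℝ) * ∑ m ∈ Finset.Ico (s + 1) K, ((1:ℝ) / (m:ℝ)^2) := by
          rw [Finset.mul_sum]
      _ ≤ (N:ℝ) * (1 / s) := by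
          apply mul_le_mul_of_nonneg_left (sum_inv_sq_le s hspos K) (le_of_lt hNr)
      _ = (N:ℝ) / s := by ring
  -- combine: total ≤ (s+1) + N/s ≤ 2s + 3 ≤ 5 √N
  have hNs : (N:ℝ) / s ≤ (s:ℝ) + 2 := by
    rw [div_le_iff₀ hsr]
    have h1 : N < (s + 1) * (s + 1) := Nat.lt_succ_sqrt N
    have h3 : N ≤ s * s + 2 * s := by nlinarith
    have h4 : (N:ℝ) ≤ (s:ℝ) * s + 2 * s := by exact_mod_cast h3
    nlinarith
  have hsqrt : (s:ℝ) ≤ Real.sqrt N := by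
    rw [show (s:ℝ) = Real.sqrt ((s:ℝ)^2) by rw [Real.sqrt_sq (le_of_lt hsr)]]
    apply Real.sqrt_le_sqrt
    have : s * s ≤ N := Nat.sqrt_le N
    have : ((s:ℝ) * s) ≤ N := by exact_mod_cast this
    nlinarith
  have h1sqrt : (1:ℝ) ≤ Real.sqrt N := by
    rw [show (1:ℝ) = Real.sqrt 1 by simp]
    apply Real.sqrt_le_sqrt
    exact_mod_cast hN
  linarith
end
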